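/- arXiv:0902.3220 — 4 statements merged into one kernel-verified Lean document; each statement's English description precedes it below -/
import Mathlib

section
/- Let G be a recurrent, regular branch subgroup of Aut(X*). Then the maximal branching subgroup G_# is a normal subgroup of G. -/
open List

/-- Vertices of the regular rooted tree over alphabet `X`: finite words. -/
abbrev Vtx (X : Type*) := List X

section Tree

variable {X : Type*} [DecidableEq X]

/-- A permutation of the vertex set is a rooted-tree automorphism if it fixes the
root and maps children of a vertex to children of its image. -/
def IsTreeAut (f : Equiv.Perm (Vtx X)) : Prop :=
  f [] = [] ∧ ∀ (w : Vtx X) (x : X), ∃ y : X, f (w ++ [x]) = f w ++ [y]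

/-- The state (section) of `f` at the vertex `w`, as a function on vertices. -/
def stateFun (f : Equiv.Perm (Vtx X)) (w : Vtx X) : Vtx X → Vtx X :=
  fun t => (f (w ++ t)).drop w.length

/-- The rigid stabilizer of the vertex `v` in the full automorphism group:
all permutations moving only (proper or improper) descendants of `v`. -/
def rist (v : Vtx X) : Subgroup (Equiv.Perm (Vtx X)) where
  carrier := {g | ∀ w : Vtx X, ¬ v <+: w → g w = w}
  one_mem' := by intro w _; rfl
  mul_mem' := by
    intro a b ha hb w hw
    have : (a * b) w = a (b w) := rfl
    rw [this, hb w hw, ha w hw]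
  inv_mem' := by
    intro a ha w hw
    have h := ha w hw
    conv_lhs => rw [← h]
    exact Equiv.symm_apply_apply a w

/-- The rigid stabilizer of `v` in `G`. -/
def ristG (G : Subgroup (Equiv.Perm (Vtx X))) (v : Vtx X) :
    Subgroup (Equiv.Perm (Vtx X)) :=
  rist v ⊓ G

/-- The `n`-th level rigid stabilizer of `G`: the subgroup generated by the
rigid stabilizers of all vertices of level `n`. -/
def ristLevel (G : Subgroup (Equiv.Perm (Vtx X))) (n : ℕ) :
    Subgroup (Equiv.Perm (Vtx X)) :=
  ⨆ v ∈ {v : Vtx X | v.length = n}, ristG G v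

/-- The `n`-th level stabilizer of `G`: elements fixing all vertices of level `≤ n`. -/
def stabLevel (G : Subgroup (Equiv.Perm (Vtx X))) (n : ℕ) :
    Subgroup (Equiv.Perm (Vtx X)) :=
  G ⊓ { carrier := {g | ∀ w : Vtx X, w.length ≤ n → g w = w}
        one_mem' := by intro w _; rfl
        mul_mem' := by
          intro a b ha hb w hw
          have : (a * b) w = a (b w) := rfl
          rw [this, hb w hw, ha w hw]
        inv_mem' := by
          intro a ha w hw
          have h := ha w hw
          conv_lhs => rw [← h]
          exact Equiv.symm_apply_apply a w }

/-- Underlying function of the vtr `v*g`. -/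
def vtrFun (v : Vtx X) (g : Vtx X → Vtx X) : Vtx X → Vtx X :=
  fun w => if v <+: w then v ++ g (w.drop v.length) else w

lemma vtr_aux (v : Vtx X) (g h : Vtx X → Vtx X)
    (hgh : ∀ t, h (g t) = t) (w : Vtx X) :
    vtrFun v h (vtrFun v g w) = w := by
  by_cases hp : v <+: w
  · obtain ⟨t, rfl⟩ := hp
    simp [vtrFun, List.drop_left, hgh, List.prefix_append]
  · simp [vtrFun, hp]

/-- The vtr `v*g`: the automorphism acting as `g` on the subtree rooted
at `v` and trivially elsewhere. -/
def vtr (v : Vtx X) (g : Equiv.Perm (Vtx X)) : Equiv.Perm (Vtx X) where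
  toFun := vtrFun v g
  invFun := vtrFun v g.symm
  left_inv := vtr_aux v g g.symm fun t => g.symm_apply_apply t
  right_inv := vtr_aux v g.symm g fun t => g.apply_symm_apply t

lemma vtr_apply (v : Vtx X) (g : Equiv.Perm (Vtx X)) (w : Vtx X) :
    vtr v g w = if v <+: w then v ++ g (w.drop v.length) else w := rfl

/-- `g ↦ v*g` as a group homomorphism. -/
def vtrHom (v : Vtx X) : Equiv.Perm (Vtx X) →* Equiv.Perm (Vtx X) where
  toFun := vtr v
  map_one' := by
    ext w
    by_cases hp : v <+: w
    · obtain ⟨t, rfl⟩ := hp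
      simp [vtr, vtrFun, List.drop_left, List.prefix_append]
    · simp [vtr, vtrFun, hp]
  map_mul' := by
    intro a b
    ext w
    have hmul : (vtr v a * vtr v b) w = vtr v a (vtr v b w) := rfl
    rw [hmul]
    by_cases hp : v <+: w
    · obtain ⟨t, rfl⟩ := hp
      simp [vtr, vtrFun, List.drop_left, List.prefix_append]
    · simp [vtr, vtrFun, hp]

/-- `K` is a branching subgroup of `G`: `K ≤ G` and `v*K ≤ K` for all vertices. -/
def IsBranching (G K : Subgroup (Equiv.Perm (Vtx X))) : Prop :=
  K ≤ G ∧ ∀ v : Vtx X, ∀ g ∈ K, vtr v g ∈ K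

/-- The product `X^n * K` of the translates `v*K` over all vertices of level `n`. -/
def levelProd (K : Subgroup (Equiv.Perm (Vtx X))) (n : ℕ) :
    Subgroup (Equiv.Perm (Vtx X)) :=
  Subgroup.closure {p | ∃ v : Vtx X, v.length = n ∧ ∃ g ∈ K, p = vtr v g}

/-- The group `G⋉v` of states at `v` of the rigid stabilizer:
those `g ∈ G` with `v*g ∈ G`. -/
def pristSub (G : Subgroup (Equiv.Perm (Vtx X))) (v : Vtx X) :
    Subgroup (Equiv.Perm (Vtx X)) :=
  G ⊓ G.comap (vtrHom v)

/-- `G_#`, the intersection of all `G⋉v` (the maximal branching subgroup when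
`G` is regular branch). -/
def Gsharp (G : Subgroup (Equiv.Perm (Vtx X))) : Subgroup (Equiv.Perm (Vtx X)) :=
  ⨅ v : Vtx X, pristSub G v

/-- `G` is self-similar: all states of elements of `G` are (induced by) elements of `G`. -/
def SelfSimilar (G : Subgroup (Equiv.Perm (Vtx X))) : Prop :=
  ∀ g ∈ G, ∀ w : Vtx X, ∃ h ∈ G, ∀ t : Vtx X, h t = stateFun g w t

/-- `G` is level-transitive: transitive on each level of the tree. -/
def LevelTransitive (G : Subgroup (Equiv.Perm (Vtx X))) : Prop :=
  ∀ v w : Vtx X, v.length = w.length → ∃ g ∈ G, g v = w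

/-- `G` is recurrent: the state at `v` of the stabilizer of `v` is all of `G`. -/
def Recurrent (G : Subgroup (Equiv.Perm (Vtx X))) : Prop :=
  ∀ v : Vtx X, ∀ h : Equiv.Perm (Vtx X),
    (h ∈ G ↔ ∃ g ∈ G, g v = v ∧ ∀ t : Vtx X, h t = stateFun g v t)

/-- `G` is a regular branch group (for this action): it has a non-trivial
branching subgroup `K` with all products `X^n*K` of finite index in `G`. -/
def RegularBranch (G : Subgroup (Equiv.Perm (Vtx X))) : Prop :=
  ∃ K : Subgroup (Equiv.Perm (Vtx X)), IsBranching G K ∧ K ≠ ⊥ ∧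
    ∀ n : ℕ, ((levelProd K n).subgroupOf G).FiniteIndex

/-- The subgroup generated by `e`-th powers of elements of `H`. -/
def powSubgroup {P : Type*} [Group P] (H : Subgroup P) (e : ℕ) : Subgroup P :=
  Subgroup.closure {x | ∃ h ∈ H, x = h ^ e}

/-- The normal closure of `g` in the subgroup `Γ`. -/
def nclosure {P : Type*} [Group P] (Γ : Subgroup P) (g : P) : Subgroup P :=
  Subgroup.closure {x | ∃ h ∈ Γ, x = h * g * h⁻¹}

/-- `g` is finite-state: it has only finitely many states. -/
def FiniteState (g : Equiv.Perm (Vtx X)) : Prop :=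
  {f : Vtx X → Vtx X | ∃ w : Vtx X, f = stateFun g w}.Finite

/-- `g` fixes the boundary ray `y`, i.e. it fixes each of its finite prefixes. -/
def fixesRay (g : Equiv.Perm (Vtx X)) (y : ℕ → X) : Prop :=
  ∀ n : ℕ, g ((List.range n).map y) = (List.range n).map y

end Tree

/-- A group satisfies a (non-trivial) group law. -/
def SatisfiesLaw (G : Type*) [Group G] : Prop :=
  ∃ w : FreeGroup ℕ, w ≠ 1 ∧ ∀ φ : FreeGroup ℕ →* G, φ w = 1

/-
If `f ∈ G` fixes `v` and has state `g` at `v` (recurrence provides such an `f` for every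
`g ∈ G`), then conjugating `v*k` by `f` gives `v*(g k g⁻¹)`. Hence `v*k ∈ G` implies
`v*(g k g⁻¹) ∈ G`, so each `G⋉v`, and therefore `G_#`, is normalized by `G`.
-/

section Tree

variable {X : Type*}

lemma IsTreeAut.exists_apply_append {f : Equiv.Perm (Vtx X)} (hf : IsTreeAut f)
    (w t : Vtx X) : ∃ s : Vtx X, f (w ++ t) = f w ++ s := by
  induction t using List.reverseRecOn with
  | nil => exact ⟨[], by simp⟩
  | append_singleton t x ih =>
      obtain ⟨s, hs⟩ := ih
      obtain ⟨y, hy⟩ := hf.2 (w ++ t) x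
      exact ⟨s ++ [y], by rw [← List.append_assoc, hy, hs, List.append_assoc]⟩

lemma IsTreeAut.apply_append_eq_of_stateFun {f g : Equiv.Perm (Vtx X)} (hf : IsTreeAut f)
    {v : Vtx X} (hv : f v = v) (hg : ∀ t, g t = stateFun f v t) (t : Vtx X) :
    f (v ++ t) = v ++ g t := by
  obtain ⟨s, hs⟩ := hf.exists_apply_append v t
  rw [hg, stateFun, hs, hv, List.drop_left]

variable [DecidableEq X]

lemma conj_vtr_of_apply_append {f g : Equiv.Perm (Vtx X)} {v : Vtx X}
    (hfg : ∀ t, f (v ++ t) = v ++ g t) (k : Equiv.Perm (Vtx X)) :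
    f * vtr v k * f⁻¹ = vtr v (g * k * g⁻¹) := by
  have hfg_inv : ∀ t, f⁻¹ (v ++ t) = v ++ g⁻¹ t := fun t => by
    rw [Equiv.Perm.inv_eq_iff_eq, hfg, Equiv.Perm.coe_inv, Equiv.apply_symm_apply]
  ext w
  simp only [Equiv.Perm.coe_mul, Function.comp_apply]
  by_cases hw : v <+: w
  · obtain ⟨t, rfl⟩ := hw
    simp only [hfg_inv, vtr_apply, List.prefix_append, if_true, List.drop_left, hfg]
    rfl
  · have hw' : ¬ v <+: f⁻¹ w := by
      rintro ⟨s, hs⟩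
      exact hw ⟨g s, by rw [← hfg, hs, Equiv.Perm.coe_inv, Equiv.apply_symm_apply]⟩
    rw [vtr_apply, if_neg hw', Equiv.Perm.coe_inv, Equiv.apply_symm_apply, vtr_apply, if_neg hw]

lemma conj_mem_pristSub_of_recurrent {G : Subgroup (Equiv.Perm (Vtx X))}
    (hAut : ∀ g ∈ G, IsTreeAut g) (hRec : Recurrent G) {g k : Equiv.Perm (Vtx X)}
    (hg : g ∈ G) {v : Vtx X} (hk : k ∈ pristSub G v) : g * k * g⁻¹ ∈ pristSub G v := by
  obtain ⟨hkG, hvk⟩ := Subgroup.mem_inf.mp hk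
  obtain ⟨f, hf, hfv, hfg⟩ := (hRec v g).mp hg
  refine Subgroup.mem_inf.mpr ⟨G.mul_mem (G.mul_mem hg hkG) (G.inv_mem hg), ?_⟩
  change vtr v (g * k * g⁻¹) ∈ G
  rw [← conj_vtr_of_apply_append ((hAut f hf).apply_append_eq_of_stateFun hfv hfg)]
  exact G.mul_mem (G.mul_mem hf hvk) (G.inv_mem hf)

end Tree

theorem Gsharp_normal_of_recurrent_general
    {X : Type*} [DecidableEq X]
    (G : Subgroup (Equiv.Perm (Vtx X))) (hAut : ∀ g ∈ G, IsTreeAut g)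
    (hRec : Recurrent G) :
    ∀ g ∈ G, ∀ k ∈ Gsharp G, g * k * g⁻¹ ∈ Gsharp G := by
  intro g hg k hk
  simp only [Gsharp, Subgroup.mem_iInf] at hk ⊢
  exact fun v => conj_mem_pristSub_of_recurrent hAut hRec hg (hk v)

/-- For a recurrent regular branch group, the maximal branching
subgroup `G_#` is normal in `G`. -/
theorem Gsharp_normal_of_recurrent
    {X : Type*} [DecidableEq X] [Fintype X]
    (G : Subgroup (Equiv.Perm (Vtx X))) (hAut : ∀ g ∈ G, IsTreeAut g)
    (hRec : Recurrent G) (hRB : RegularBranch G) :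
    ∀ g ∈ G, ∀ k ∈ Gsharp G, g * k * g⁻¹ ∈ Gsharp G :=
  Gsharp_normal_of_recurrent_general G hAut hRec
end

section
/- Let G ≤ Aut(X*) be a self-similar, level-transitive, regular branch group. Then there exists an integer n such that G⋉(uv) = G⋉v for all words u, v ∈ X* with |v| ≥ n. -/
open List

/-
The index `d v = [G : G⋉v]` is finite, since every `G⋉v` contains the finite-index branching
subgroup `K`. Self-similarity gives `G⋉(uv) ≤ G⋉v`, so `d v ∣ d (uv)`; conjugating by an
element of `G` moving `v` to `w` (level transitivity) conjugates `G⋉v` into `G⋉w` through the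
state at `v`, so `d` depends only on `|v|`. A word `v₀` maximising the bounded function `d` then
fixes `d` on all words of length at least `|v₀|`, and a subgroup inclusion between subgroups of
the same finite index is an equality.
-/

open scoped Pointwise

theorem Subgroup.relIndex_dvd_of_conj_smul_le {M : Type*} [Group M] {A B L : Subgroup M}
    {s : M} (hs : s ∈ L) (h : MulAut.conj s • A ≤ B) : B.relIndex L ∣ A.relIndex L := by
  rw [← Subgroup.relIndex_pointwise_smul (MulAut.conj s) A L,
    Subgroup.conj_smul_eq_self_of_mem hs]
  exact Subgroup.relIndex_dvd_of_le_left L h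

theorem Subgroup.eq_of_le_of_relIndex_eq {M : Type*} [Group M] {H K L : Subgroup M}
    (hHK : H ≤ K) (hK : K ≤ L) (hH : H.relIndex L ≠ 0) (h : H.relIndex L = K.relIndex L) :
    H = K := by
  refine le_antisymm hHK (Subgroup.relIndex_eq_one.mp ?_)
  have hmul := Subgroup.relIndex_mul_relIndex H K L hHK hK
  rw [h] at hmul hH
  exact (mul_eq_right₀ hH).mp hmul

theorem exists_apply_append_eq_of_dvd {α : Type*} {d : List α → ℕ} {N : ℕ} (hN : N ≠ 0)
    (hbound : ∀ v, d v ∣ N) (hlen : ∀ v w, v.length = w.length → d v = d w)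
    (hdvd : ∀ u v, d v ∣ d (u ++ v)) :
    ∃ n, ∀ u v, n ≤ v.length → d (u ++ v) = d v := by
  have hbdd : BddAbove (Set.range d) :=
    ⟨N, by rintro _ ⟨v, rfl⟩; exact Nat.le_of_dvd (Nat.pos_of_ne_zero hN) (hbound v)⟩
  obtain ⟨v₀, hv₀⟩ := Nat.sSup_mem (Set.range_nonempty d) hbdd
  have hconst : ∀ v : List α, v₀.length ≤ v.length → d v = d v₀ := by
    intro v hv
    have hpos : 0 < d v := Nat.pos_of_dvd_of_pos (hbound v) (Nat.pos_of_ne_zero hN)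
    have hmax : d v ≤ d v₀ := hv₀ ▸ le_csSup hbdd ⟨v, rfl⟩
    have hpad : d v = d (v.take (v.length - v₀.length) ++ v₀) :=
      hlen _ _ (by simp only [List.length_append, List.length_take]; omega)
    exact le_antisymm hmax (Nat.le_of_dvd hpos (hpad ▸ hdvd _ v₀))
  exact ⟨v₀.length, fun u v hv =>
    (hconst _ (hv.trans (by simp))).trans (hconst v hv).symm⟩

namespace IsTreeAut

variable {X : Type*} {f : Equiv.Perm (Vtx X)}

theorem exists_apply_append_s4 (hf : IsTreeAut f) (v t : Vtx X) :
    ∃ r : Vtx X, r.length = t.length ∧ f (v ++ t) = f v ++ r := by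
  induction t using List.reverseRecOn with
  | nil => exact ⟨[], rfl, by simp⟩
  | append_singleton t x ih =>
    obtain ⟨r, hr, hfr⟩ := ih
    obtain ⟨y, hy⟩ := hf.2 (v ++ t) x
    exact ⟨r ++ [y], by simp [hr], by rw [← List.append_assoc, hy, hfr, List.append_assoc]⟩

theorem length_apply (hf : IsTreeAut f) (v : Vtx X) : (f v).length = v.length := by
  obtain ⟨r, hr, hfr⟩ := hf.exists_apply_append_s4 [] v
  rw [List.nil_append, hf.1, List.nil_append] at hfr
  rw [hfr, hr]

theorem apply_append (hf : IsTreeAut f) (v t : Vtx X) :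
    f (v ++ t) = f v ++ stateFun f v t := by
  obtain ⟨r, -, hfr⟩ := hf.exists_apply_append_s4 v t
  rw [stateFun, hfr, ← hf.length_apply v, List.drop_left]

end IsTreeAut

section Tree

variable {X : Type*} [DecidableEq X]

theorem vtr_nil (g : Equiv.Perm (Vtx X)) : vtr [] g = g := by
  ext w
  simp [vtr_apply]

theorem vtr_append (u v : Vtx X) (g : Equiv.Perm (Vtx X)) :
    vtr (u ++ v) g = vtr u (vtr v g) := by
  ext w
  by_cases hu : u <+: w
  · obtain ⟨r, rfl⟩ := hu
    by_cases hv : v <+: r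
    · obtain ⟨t, rfl⟩ := hv
      simp [vtr_apply, List.prefix_append]
    · have huv : ¬ u ++ v <+: u ++ r := fun h => hv ((List.prefix_append_right_inj u).mp h)
      simp [vtr_apply, huv, hv, List.prefix_append]
  · have huv : ¬ u ++ v <+: w := fun h => hu ((List.prefix_append u v).trans h)
    simp [vtr_apply, hu, huv]

theorem stateFun_vtr_self (v : Vtx X) (g : Equiv.Perm (Vtx X)) (t : Vtx X) :
    stateFun (vtr v g) v t = g t := by
  simp [stateFun, vtr_apply, List.prefix_append]

theorem IsTreeAut.mul_vtr_mul_inv {f : Equiv.Perm (Vtx X)} (hf : IsTreeAut f) {v : Vtx X}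
    {s : Equiv.Perm (Vtx X)} (hs : ∀ t, s t = stateFun f v t) (g : Equiv.Perm (Vtx X)) :
    f * vtr v g * f⁻¹ = vtr (f v) (s * g * s⁻¹) := by
  have hf_append : ∀ t, f (v ++ t) = f v ++ s t := fun t => by rw [hf.apply_append, hs]
  have hf_inv_append : ∀ t, f⁻¹ (f v ++ t) = v ++ s⁻¹ t := fun t => by
    rw [Equiv.Perm.inv_eq_iff_eq, hf_append]
    simp
  ext w
  simp only [Equiv.Perm.mul_apply]
  by_cases hw : f v <+: w
  · obtain ⟨t, rfl⟩ := hw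
    simp [hf_inv_append, vtr_apply, List.prefix_append, hf_append]
  · have hv : ¬ v <+: f⁻¹ w := by
      rintro ⟨r, hr⟩
      exact hw ⟨s r, by simp [← hf_append, hr]⟩
    rw [vtr_apply, if_neg hv, vtr_apply, if_neg hw]
    simp

variable {G : Subgroup (Equiv.Perm (Vtx X))}

theorem mem_pristSub {v : Vtx X} {g : Equiv.Perm (Vtx X)} :
    g ∈ pristSub G v ↔ g ∈ G ∧ vtr v g ∈ G :=
  Iff.rfl

theorem pristSub_le (v : Vtx X) : pristSub G v ≤ G :=
  inf_le_left

theorem SelfSimilar.pristSub_append_le (hSS : SelfSimilar G) (u v : Vtx X) :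
    pristSub G (u ++ v) ≤ pristSub G v := by
  intro g hg
  obtain ⟨hgG, huvg⟩ := mem_pristSub.mp hg
  rw [vtr_append] at huvg
  obtain ⟨h, hG, hh⟩ := hSS _ huvg u
  have hstate : h = vtr v g := Equiv.ext fun t => by rw [hh, stateFun_vtr_self]
  exact mem_pristSub.mpr ⟨hgG, hstate ▸ hG⟩

theorem IsBranching.le_pristSub {K : Subgroup (Equiv.Perm (Vtx X))} (hK : IsBranching G K)
    (v : Vtx X) : K ≤ pristSub G v := fun g hg =>
  mem_pristSub.mpr ⟨hK.1 hg, hK.1 (hK.2 v g hg)⟩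

theorem levelProd_zero (K : Subgroup (Equiv.Perm (Vtx X))) : levelProd K 0 = K := by
  have hgen : {p | ∃ v : Vtx X, v.length = 0 ∧ ∃ g ∈ K, p = vtr v g} = (K : Set _) := by
    ext p
    simp [vtr_nil]
  rw [levelProd, hgen, Subgroup.closure_eq]

theorem conj_smul_pristSub_le (hAut : ∀ g ∈ G, IsTreeAut g) {f s : Equiv.Perm (Vtx X)}
    (hf : f ∈ G) (hs : s ∈ G) {v : Vtx X} (hfs : ∀ t, s t = stateFun f v t) :
    MulAut.conj s • pristSub G v ≤ pristSub G (f v) := by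
  rintro - ⟨g, hg, rfl⟩
  obtain ⟨hgG, hvg⟩ := mem_pristSub.mp hg
  refine mem_pristSub.mpr ⟨mul_mem (mul_mem hs hgG) (inv_mem hs), ?_⟩
  change vtr (f v) (s * g * s⁻¹) ∈ G
  rw [← (hAut f hf).mul_vtr_mul_inv hfs]
  exact mul_mem (mul_mem hf hvg) (inv_mem hf)

theorem relIndex_pristSub_eq_of_length_eq (hAut : ∀ g ∈ G, IsTreeAut g) (hSS : SelfSimilar G)
    (hLT : LevelTransitive G) {v w : Vtx X} (hvw : v.length = w.length) :
    (pristSub G v).relIndex G = (pristSub G w).relIndex G := by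
  have hdvd : ∀ v w : Vtx X, v.length = w.length →
      (pristSub G w).relIndex G ∣ (pristSub G v).relIndex G := by
    intro v w hvw
    obtain ⟨f, hf, rfl⟩ := hLT v w hvw
    obtain ⟨s, hs, hfs⟩ := hSS f hf v
    exact Subgroup.relIndex_dvd_of_conj_smul_le hs (conj_smul_pristSub_le hAut hf hs hfs)
  exact Nat.dvd_antisymm (hdvd w v hvw.symm) (hdvd v w hvw)

end Tree

theorem exists_level_prist_stable_general
    {X : Type*} [DecidableEq X]
    (G : Subgroup (Equiv.Perm (Vtx X))) (hAut : ∀ g ∈ G, IsTreeAut g)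
    (hSS : SelfSimilar G) (hLT : LevelTransitive G) (hRB : RegularBranch G) :
    ∃ n : ℕ, ∀ u v : Vtx X, n ≤ v.length → pristSub G (u ++ v) = pristSub G v := by
  obtain ⟨K, hK, -, hfin⟩ := hRB
  have hKfin : K.relIndex G ≠ 0 := by
    simpa [Subgroup.relIndex, levelProd_zero] using (hfin 0).index_ne_zero
  have hdvdK : ∀ v, (pristSub G v).relIndex G ∣ K.relIndex G := fun v =>
    Subgroup.relIndex_dvd_of_le_left G (hK.le_pristSub v)
  obtain ⟨n, hn⟩ := exists_apply_append_eq_of_dvd (d := fun v => (pristSub G v).relIndex G)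
    hKfin hdvdK (fun v w => relIndex_pristSub_eq_of_length_eq hAut hSS hLT)
    (fun u v => Subgroup.relIndex_dvd_of_le_left G (hSS.pristSub_append_le u v))
  refine ⟨n, fun u v hv => Subgroup.eq_of_le_of_relIndex_eq (hSS.pristSub_append_le u v)
    (pristSub_le v) ?_ (hn u v hv)⟩
  exact (Nat.pos_of_dvd_of_pos (hdvdK (u ++ v)) (Nat.pos_of_ne_zero hKfin)).ne'

/-- In a self-similar, level-transitive, regular branch group the
groups `G⋉v` only depend on `v` once `v` is long enough: there is `n` with
`G⋉(uv) = G⋉v` whenever `|v| ≥ n`. -/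
theorem exists_level_prist_stable
    {X : Type*} [DecidableEq X] [Fintype X]
    (G : Subgroup (Equiv.Perm (Vtx X))) (hAut : ∀ g ∈ G, IsTreeAut g)
    (hSS : SelfSimilar G) (hLT : LevelTransitive G) (hRB : RegularBranch G) :
    ∃ n : ℕ, ∀ u v : Vtx X, n ≤ v.length → pristSub G (u ++ v) = pristSub G v :=
  exists_level_prist_stable_general G hAut hSS hLT hRB
end

section
/- Let V = {1, u, v, uv} be the Klein four-group acting on Ẑ³ (Ẑ the profinite completion of ℤ) so that u acts by (α,β,γ) ↦ (−α, β, −γ) (and cyclic analogues for v, uv). Then any extension 1 → Ẑ³ → K → V → 1 realizing this action, in which some lift x of u satisfies x² = e^{2β+1} for the middle basis vector e and some β ∈ Ẑ (as in the Hanoi group congruence kernel), is torsion-free; in particular every lift of u to K has infinite order and the extension does not split. -/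
instance (p : Nat.Primes) : Fact (Nat.Prime p) := ⟨p.2⟩

/-- The profinite completion `Ẑ` of `ℤ`, realized as the product of all rings
of `p`-adic integers. -/
abbrev Zhat : Type := ∀ p : Nat.Primes, PadicInt p

/-- The half-turn involution `σ(α, β, γ) = (-α, β, -γ)` of `Ẑ³`. -/
noncomputable def halfTurn (m : Zhat × Zhat × Zhat) : Zhat × Zhat × Zhat :=
  (-m.1, m.2.1, -m.2.2)

/-! Write `y ∉ M` as `y = m x` with `m ∈ M`. Then `y² = m · (x m x⁻¹) · x²`, which in `Ẑ³`
reads `(a, b, c) + (-a, b, -c) + (0, 2β + 1, 0) = (0, 2(b + β) + 1, 0)`; this is nonzero since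
`2t + 1` is odd in the `2`-adic component. So no element outside `M` squares to `1`. If now
`kⁿ = 1` with `k ∉ M`, then `(k²)ⁿ = 1` in the torsion-free group `M ≅ Ẑ³`, forcing `k² = 1`. -/

lemma two_mul_add_one_ne_zero_of_ringHom {R S : Type*} [Ring R] [Ring S] [Nontrivial S]
    [CharP S 2] (f : R →+* S) (t : R) : 2 * t + 1 ≠ 0 := fun h => by
  have := congrArg f h
  rw [map_add, map_mul, map_ofNat, CharTwo.two_eq_zero, zero_mul, zero_add, map_one,
    map_zero] at this
  exact one_ne_zero this

lemma Zhat.two_mul_add_one_ne_zero (t : Zhat) : 2 * t + 1 ≠ 0 :=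
  let two : Nat.Primes := ⟨2, Nat.prime_two⟩
  have : CharP (ZMod two) 2 := ZMod.charP 2
  two_mul_add_one_ne_zero_of_ringHom (PadicInt.toZMod.comp (Pi.evalRingHom _ two)) t

lemma add_halfTurn (a : Zhat × Zhat × Zhat) : a + halfTurn a = (0, 2 * a.2.1, 0) := by
  ext <;> simp [halfTurn, two_mul]

theorem Subgroup.eq_one_of_pow_eq_one_of_index_eq_two {K : Type*} [Group K] {M : Subgroup K}
    [IsMulTorsionFree M] (hidx : M.index = 2) (hsq : ∀ y ∉ M, y ^ 2 ≠ 1) {k : K} {n : ℕ}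
    (hn : n ≠ 0) (hk : k ^ n = 1) : k = 1 := by
  by_cases hkM : k ∈ M
  · have : (⟨k, hkM⟩ : M) ^ n = 1 := Subtype.ext (by simpa using hk)
    simpa using (pow_eq_one_iff_left hn).1 this
  · have hk2 : (⟨k ^ 2, sq_mem_of_index_two hidx k⟩ : M) ^ n = 1 :=
      Subtype.ext (by simp [pow_right_comm k 2 n, hk])
    exact absurd (congrArg Subtype.val ((pow_eq_one_iff_left hn).1 hk2)) (hsq k hkM)

lemma sq_ne_one_of_notMem {K : Type*} [Group K] {M : Subgroup K} (hnorm : M.Normal)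
    (hidx : M.index = 2) (φ : M ≃* Multiplicative (Zhat × Zhat × Zhat))
    (hact : ∀ x : K, x ∉ M → ∀ m : M,
      φ ⟨x * (m : K) * x⁻¹, hnorm.conj_mem (m : K) m.2 x⟩ =
        Multiplicative.ofAdd (halfTurn (Multiplicative.toAdd (φ m))))
    {x : K} (hx : x ∉ M) (hx2 : x ^ 2 ∈ M) {β : Zhat}
    (hxsq : φ ⟨x ^ 2, hx2⟩ = Multiplicative.ofAdd (0, 2 * β + 1, 0))
    {y : K} (hy : y ∉ M) : y ^ 2 ≠ 1 := by
  have hyx : y * x⁻¹ ∈ M := by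
    rw [Subgroup.mul_mem_iff_of_index_two hidx, M.inv_mem_iff]
    exact iff_of_false hy hx
  let m : M := ⟨y * x⁻¹, hyx⟩
  have hsplit : (⟨y ^ 2, Subgroup.sq_mem_of_index_two hidx y⟩ : M) =
      m * ⟨x * m * x⁻¹, hnorm.conj_mem m m.2 x⟩ * ⟨x ^ 2, hx2⟩ :=
    Subtype.ext (by simp only [Subgroup.coe_mul, pow_two, m]; group)
  have hodd : Multiplicative.toAdd (φ ⟨y ^ 2, Subgroup.sq_mem_of_index_two hidx y⟩) =
      (0, 2 * ((Multiplicative.toAdd (φ m)).2.1 + β) + 1, 0) := by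
    rw [hsplit, φ.map_mul, φ.map_mul, hact x hx, hxsq, toAdd_mul, toAdd_mul, toAdd_ofAdd,
      toAdd_ofAdd, add_halfTurn]
    simp only [Prod.mk_add_mk, add_zero]
    congr 2
    ring
  intro hy1
  rw [show (⟨y ^ 2, _⟩ : M) = 1 from Subtype.ext hy1, map_one, toAdd_one] at hodd
  exact Zhat.two_mul_add_one_ne_zero _ (congrArg (·.2.1) hodd).symm

/-- let `K` be a group containing a normal subgroup `M` of index 2
isomorphic (via `φ`) to `Ẑ³`, such that conjugation by any element outside `M`
acts on `M ≅ Ẑ³` as the half-turn `σ(α,β,γ) = (-α,β,-γ)`, and such that some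
`x ∉ M` satisfies `x² = e^{2β+1}` (the middle basis vector to an odd power).
Then `K` is torsion-free; in particular every element outside `M` (every lift
of the involution `u`) has infinite order. -/
theorem hanoi_kernel_extension_torsion_free
    (K : Type*) [Group K] (M : Subgroup K) (hnorm : M.Normal)
    (hidx : M.index = 2)
    (φ : M ≃* Multiplicative (Zhat × Zhat × Zhat))
    (hact : ∀ x : K, x ∉ M → ∀ m : M,
      φ ⟨x * (m : K) * x⁻¹, hnorm.conj_mem (m : K) m.2 x⟩ =
        Multiplicative.ofAdd (halfTurn (Multiplicative.toAdd (φ m))))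
    (x : K) (hx : x ∉ M) (hx2 : x ^ 2 ∈ M) (β : Zhat)
    (hxsq : φ ⟨x ^ 2, hx2⟩ = Multiplicative.ofAdd (0, 2 * β + 1, 0)) :
    (∀ k : K, k ≠ 1 → ∀ n : ℕ, 0 < n → k ^ n ≠ 1) ∧
    (∀ y : K, y ∉ M → ∀ n : ℕ, 0 < n → y ^ n ≠ 1) := by
  have : IsMulTorsionFree M := φ.injective.isMulTorsionFree φ.toMonoidHom
  have hsq : ∀ y ∉ M, y ^ 2 ≠ 1 := fun y hy =>
    sq_ne_one_of_notMem hnorm hidx φ hact hx hx2 hxsq hy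
  have htf : ∀ k : K, k ≠ 1 → ∀ n : ℕ, 0 < n → k ^ n ≠ 1 := fun k hk n hn hkn =>
    hk (Subgroup.eq_one_of_pow_eq_one_of_index_eq_two hidx hsq hn.ne' hkn)
  exact ⟨htf, fun y hy => htf y (fun h => hy (h ▸ M.one_mem))⟩
end

section
/- Let Γ be a group acting on a rooted tree, and suppose the filter of finite-index normal subgroups of Γ and the filter {rist_Γ(n)' · rist_Γ(n)^e : n, e ∈ ℕ} are cofinal (every member of one contains a member of the other). Then the branch kernel ker(Γ̂ → Γ̃), the kernel of the natural map from the profinite completion of Γ to the completion of Γ with respect to the subgroups rist_Γ(n), is Abelian. Moreover, if there is e ≥ 1 with rist_Γ(n)/rist_Γ(n)' of exponent dividing e for all n, then this kernel has exponent dividing e. -/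
open List

section Completions

variable (G : Type*) [Group G]

/-- The index set of the profinite completion: finite-index normal subgroups. -/
abbrev FIN : Type _ := {N : Subgroup G // N.Normal ∧ N.FiniteIndex}

instance FIN.normal {H : Type*} [Group H] (N : FIN H) : N.1.Normal := N.2.1

/-- The profinite completion of `G`, realized as the subgroup of compatible
tuples in the product of all finite quotients of `G`. -/
def ProfinComp : Subgroup (∀ N : FIN G, G ⧸ N.1) where
  carrier := {x | ∀ (N M : FIN G) (h : N.1 ≤ M.1),
    QuotientGroup.map N.1 M.1 (MonoidHom.id G) (by simpa using h) (x N) = x M}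
  one_mem' := by intro N M h; simp
  mul_mem' := by
    intro a b ha hb N M h
    simp only [Pi.mul_apply, map_mul, ha N M h, hb N M h]
  inv_mem' := by
    intro a ha N M h
    simp only [Pi.inv_apply, map_inv, ha N M h]

end Completions

variable {X : Type*} [DecidableEq X] [Fintype X]

/-- The normal core in `Γ` of the `n`-th level rigid stabilizer; the branch
(= rigid-stabilizer) topology on `Γ` is generated by these subgroups, so the
branch completion is the inverse limit of the quotients by them, and the branch
kernel `ker(Γ̂ → Γ̃)` consists of the elements of the profinite completion
whose coordinates at all these subgroups are trivial. -/
abbrev ristCore (Γ : Subgroup (Equiv.Perm (Vtx X))) (n : ℕ) : Subgroup ↥Γ :=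
  ((ristLevel Γ n).subgroupOf Γ).normalCore

/-!
An element of the branch kernel is trivial modulo every `ristCore Γ n`, so its coordinate in any
finite quotient `Γ/N` is represented by an element of `rist_Γ(n)`, for whichever `n` we like.
Cofinality lets us pick `n` with `rist_Γ(n)' ≤ N`: then two such representatives commute modulo
`N`, and if `rist_Γ(n)/rist_Γ(n)'` has exponent dividing `e`, their `e`-th powers lie in `N`.
-/

namespace ProfinComp

open scoped commutatorElement

variable {G : Type*} [Group G]

lemma exists_mem_of_apply_eq_one {x : ∀ N : FIN G, G ⧸ N.1} (hx : x ∈ ProfinComp G)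
    {M : FIN G} (hM : x M = 1) (N : FIN G) : ∃ g ∈ M.1, x N = g := by
  have := N.2.2
  have := M.2.2
  let P : FIN G := ⟨N.1 ⊓ M.1, inferInstance, inferInstance⟩
  obtain ⟨g, hg⟩ := QuotientGroup.mk_surjective (x P)
  have hgM : (g : G ⧸ M.1) = x M := by simpa [← hg] using hx P M inf_le_right
  have hgN : (g : G ⧸ N.1) = x N := by simpa [← hg] using hx P N inf_le_left
  exact ⟨g, (QuotientGroup.eq_one_iff g).mp (hgM.trans hM), hgN.symm⟩

lemma commute_of_commutator_cofinal {ι : Type*} (K : ι → FIN G)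
    (hK : ∀ N : FIN G, ∃ i, ⁅(K i).1, (K i).1⁆ ≤ N.1) {a b : ProfinComp G}
    (ha : ∀ i, a.1 (K i) = 1) (hb : ∀ i, b.1 (K i) = 1) : Commute a b := by
  refine Subtype.ext (funext fun N => ?_)
  obtain ⟨i, hi⟩ := hK N
  obtain ⟨g, hgK, hg⟩ := exists_mem_of_apply_eq_one a.2 (ha i) N
  obtain ⟨h, hhK, hh⟩ := exists_mem_of_apply_eq_one b.2 (hb i) N
  have hcomm : (g * h)⁻¹ * (h * g) ∈ N.1 := by
    rw [show (g * h)⁻¹ * (h * g) = ⁅h⁻¹, g⁻¹⁆ by group]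
    exact hi (Subgroup.commutator_mem_commutator (inv_mem hhK) (inv_mem hgK))
  change a.1 N * b.1 N = b.1 N * a.1 N
  rw [hg, hh, ← QuotientGroup.mk_mul, ← QuotientGroup.mk_mul]
  exact QuotientGroup.eq.mpr hcomm

lemma pow_eq_one_of_pow_mem_cofinal {ι : Type*} (K : ι → FIN G) {e : ℕ}
    (hK : ∀ N : FIN G, ∃ i, ∀ g ∈ (K i).1, g ^ e ∈ N.1) {a : ProfinComp G}
    (ha : ∀ i, a.1 (K i) = 1) : a ^ e = 1 := by
  refine Subtype.ext (funext fun N => ?_)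
  obtain ⟨i, hi⟩ := hK N
  obtain ⟨g, hgK, hg⟩ := exists_mem_of_apply_eq_one a.2 (ha i) N
  change a.1 N ^ e = 1
  rw [hg, ← QuotientGroup.mk_pow]
  exact (QuotientGroup.eq_one_iff _).mpr (hi g hgK)

end ProfinComp

theorem branch_kernel_abelian_general
    (Γ : Subgroup (Equiv.Perm (Vtx X)))
    (hbr : ∀ n : ℕ, ((ristLevel Γ n).subgroupOf Γ).FiniteIndex)
    (hcof₁ : ∀ N : Subgroup ↥Γ, N.Normal → N.FiniteIndex →
      ∃ n e : ℕ, ⁅(ristLevel Γ n).subgroupOf Γ, (ristLevel Γ n).subgroupOf Γ⁆ ⊔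
        powSubgroup ((ristLevel Γ n).subgroupOf Γ) e ≤ N) :
    (∀ a b : ↥(ProfinComp ↥Γ),
      (∀ n : ℕ, (a : ∀ N : FIN ↥Γ, ↥Γ ⧸ N.1)
        ⟨ristCore Γ n, Subgroup.normalCore_normal _,
          @Subgroup.finiteIndex_normalCore _ _ _ (hbr n)⟩ = 1) →
      (∀ n : ℕ, (b : ∀ N : FIN ↥Γ, ↥Γ ⧸ N.1)
        ⟨ristCore Γ n, Subgroup.normalCore_normal _,
          @Subgroup.finiteIndex_normalCore _ _ _ (hbr n)⟩ = 1) →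
      a * b = b * a) ∧
    (∀ e : ℕ, 1 ≤ e →
      (∀ n : ℕ, ∀ x ∈ (ristLevel Γ n).subgroupOf Γ,
        x ^ e ∈ ⁅(ristLevel Γ n).subgroupOf Γ, (ristLevel Γ n).subgroupOf Γ⁆) →
      ∀ a : ↥(ProfinComp ↥Γ),
        (∀ n : ℕ, (a : ∀ N : FIN ↥Γ, ↥Γ ⧸ N.1)
          ⟨ristCore Γ n, Subgroup.normalCore_normal _,
            @Subgroup.finiteIndex_normalCore _ _ _ (hbr n)⟩ = 1) →
        a ^ e = 1) := by
  set R : ℕ → Subgroup ↥Γ := fun n => (ristLevel Γ n).subgroupOf Γ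
  let K : ℕ → FIN ↥Γ := fun n =>
    ⟨ristCore Γ n, Subgroup.normalCore_normal _, @Subgroup.finiteIndex_normalCore _ _ _ (hbr n)⟩
  have hcomm_le : ∀ N : FIN ↥Γ, ∃ n, ⁅R n, R n⁆ ≤ N.1 := fun N =>
    let ⟨n, _, h⟩ := hcof₁ N.1 N.2.1 N.2.2
    ⟨n, le_sup_left.trans h⟩
  refine ⟨fun a b ha hb => (ProfinComp.commute_of_commutator_cofinal K (fun N => ?_) ha hb).eq,
    fun e _ hexp a ha => ProfinComp.pow_eq_one_of_pow_mem_cofinal K (fun N => ?_) ha⟩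
  · obtain ⟨n, hn⟩ := hcomm_le N
    exact ⟨n, (Subgroup.commutator_mono (Subgroup.normalCore_le _) (Subgroup.normalCore_le _)).trans hn⟩
  · obtain ⟨n, hn⟩ := hcomm_le N
    exact ⟨n, fun g hg => hn (hexp n g (Subgroup.normalCore_le _ hg))⟩

/-- if the filter of finite-index normal subgroups of `Γ` is
cofinal with the filter of the subgroups `rist_Γ(n)' ⬝ rist_Γ(n)^e`, then the
branch kernel, i.e. the kernel of the natural map from the profinite completion
of `Γ` to its branch completion, is Abelian; and if moreover all quotients
`rist_Γ(n)/rist_Γ(n)'` have exponent dividing `e`, the branch kernel has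
exponent dividing `e`. -/
theorem branch_kernel_abelian
    (Γ : Subgroup (Equiv.Perm (Vtx X))) (hAut : ∀ g ∈ Γ, IsTreeAut g)
    (hbr : ∀ n : ℕ, ((ristLevel Γ n).subgroupOf Γ).FiniteIndex)
    (hcof₁ : ∀ N : Subgroup ↥Γ, N.Normal → N.FiniteIndex →
      ∃ n e : ℕ, ⁅(ristLevel Γ n).subgroupOf Γ, (ristLevel Γ n).subgroupOf Γ⁆ ⊔
        powSubgroup ((ristLevel Γ n).subgroupOf Γ) e ≤ N)
    (hcof₂ : ∀ n e : ℕ, ∃ N : Subgroup ↥Γ, N.Normal ∧ N.FiniteIndex ∧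
      N ≤ ⁅(ristLevel Γ n).subgroupOf Γ, (ristLevel Γ n).subgroupOf Γ⁆ ⊔
        powSubgroup ((ristLevel Γ n).subgroupOf Γ) e) :
    (∀ a b : ↥(ProfinComp ↥Γ),
      (∀ n : ℕ, (a : ∀ N : FIN ↥Γ, ↥Γ ⧸ N.1)
        ⟨ristCore Γ n, Subgroup.normalCore_normal _,
          @Subgroup.finiteIndex_normalCore _ _ _ (hbr n)⟩ = 1) →
      (∀ n : ℕ, (b : ∀ N : FIN ↥Γ, ↥Γ ⧸ N.1)
        ⟨ristCore Γ n, Subgroup.normalCore_normal _,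
          @Subgroup.finiteIndex_normalCore _ _ _ (hbr n)⟩ = 1) →
      a * b = b * a) ∧
    (∀ e : ℕ, 1 ≤ e →
      (∀ n : ℕ, ∀ x ∈ (ristLevel Γ n).subgroupOf Γ,
        x ^ e ∈ ⁅(ristLevel Γ n).subgroupOf Γ, (ristLevel Γ n).subgroupOf Γ⁆) →
      ∀ a : ↥(ProfinComp ↥Γ),
        (∀ n : ℕ, (a : ∀ N : FIN ↥Γ, ↥Γ ⧸ N.1)
          ⟨ristCore Γ n, Subgroup.normalCore_normal _,
            @Subgroup.finiteIndex_normalCore _ _ _ (hbr n)⟩ = 1) →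
        a ^ e = 1) :=
  branch_kernel_abelian_general Γ hbr hcof₁
end
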